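/- Let S = (X_0,…,X_{d−1}) be a d-symbol with balanced quotient Q = Q(S) and core C = C(S), and set x_i = |X_i|. There exists a bijection ω from H(S) onto the disjoint union H(Q) ⊔ H(C) such that for every d-hook data tuple δ = (c_0,…,c_{d−1}; k) and every z ∈ H(S): if ω(z) ∈ H(Q) then h^δ(z) = h̄^{δ_S}(ω(z)), and if ω(z) ∈ H(C) then h^δ(z) = h^δ(ω(z)). Here δ_S = (c_0 + x_0 k, …, c_{d−1} + x_{d−1} k; k). -/

import Mathlib

/-- `X^{+s} = (X + s) ∪ {0,…,s−1}` for a β-set `X`. -/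
def shiftUp (X : Finset ℕ) (s : ℕ) : Finset ℕ :=
  X.image (· + s) ∪ Finset.range s

/-- The `d`-symbol `s_d(X)` associated to a β-set `X`:
`X_i^{(d)} = {k ∈ ℕ : i + k*d ∈ X}`. -/
def sd (d : ℕ) (X : Finset ℕ) : Fin d → Finset ℕ :=
  fun i => (X.filter fun a => a % d = (i : ℕ)).image fun a => a / d

/-- The inverse of `s_d`, recovering the β-set of a `d`-symbol. -/
def sdInv (d : ℕ) (S : Fin d → Finset ℕ) : Finset ℕ :=
  Finset.univ.biUnion fun i => (S i).image fun k => (i : ℕ) + k * d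

/-- Hooks of a β-set `X`: pairs `(a,b)` with `a > b`, `a ∈ X`, `b ∉ X`. -/
def betaHooks (X : Finset ℕ) : Finset (ℕ × ℕ) :=
  (X ×ˢ Finset.range (X.sup id + 1)).filter fun p => p.2 < p.1 ∧ p.2 ∉ X

/-- Hooks of a `d`-symbol `S`: quadruples `(a,b,i,j)` with `a ∈ S i`, `b ∉ S j`,
and either `a > b`, or `a = b` and `i > j`. -/
def symbolHooks {d : ℕ} (S : Fin d → Finset ℕ) : Finset (ℕ × ℕ × Fin d × Fin d) :=
  (Finset.range ((Finset.univ.sup fun i => (S i).sup id) + 1) ×ˢ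
      Finset.range ((Finset.univ.sup fun i => (S i).sup id) + 1) ×ˢ
      (Finset.univ : Finset (Fin d)) ×ˢ (Finset.univ : Finset (Fin d))).filter
    fun z => z.1 ∈ S z.2.2.1 ∧ z.2.1 ∉ S z.2.2.2 ∧
      (z.2.1 < z.1 ∨ (z.1 = z.2.1 ∧ z.2.2.2 < z.2.2.1))

/-- The partition `p(X)` of a β-set `X = {a_1 > … > a_t}`, as the multiset of the
nonzero numbers among `a_i − (t−i)`; the element `a` contributes the part
`a − #{b ∈ X : b < a}`. -/
def partitionOf (X : Finset ℕ) : Multiset ℕ :=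
  Multiset.filter (· ≠ 0) (X.val.map fun a => a - (X.filter (· < a)).card)

/-- `r`, the maximal number of parts among the partitions `p(X_i)` of a `d`-symbol. -/
def quotCard {d : ℕ} (S : Fin d → Finset ℕ) : ℕ :=
  Finset.univ.sup fun i => Multiset.card (partitionOf (S i))

/-- `Y` is the balanced quotient `Q(S)` of `S`: each `Y i` is the (unique) β-set of
cardinality `r` with `p(Y i) = p(S i)`, where `r` is the maximal number of parts
among the `p(S i)`. -/
def IsBalancedQuotient {d : ℕ} (S Y : Fin d → Finset ℕ) : Prop :=
  ∀ i, (Y i).card = quotCard S ∧ partitionOf (Y i) = partitionOf (S i)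

/-- The core `C(S) = ([x_0],…,[x_{d−1}])` of a `d`-symbol, `x_i = |X_i|`. -/
def coreSymbol {d : ℕ} (S : Fin d → Finset ℕ) : Fin d → Finset ℕ :=
  fun i => Finset.range (S i).card

/-- The `δ`-length `k(a−b) + c_i − c_j` of a hook `(a,b,i,j)`, for the
`d`-hook data tuple `δ = (c_0,…,c_{d−1};k)`. -/
noncomputable def hookLen {d : ℕ} (c : Fin d → ℝ) (k : ℝ)
    (z : ℕ × ℕ × Fin d × Fin d) : ℝ :=
  k * ((z.1 - z.2.1 : ℕ) : ℝ) + c z.2.2.1 - c z.2.2.2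

/-- The multiset `𝓗^δ(S)` of `δ`-lengths of all hooks of `S`. -/
noncomputable def hookLens {d : ℕ} (c : Fin d → ℝ) (k : ℝ)
    (S : Fin d → Finset ℕ) : Multiset ℝ :=
  (symbolHooks S).val.map (hookLen c k)

/-- `H_{ij}^ℓ(S)`, the set of hooks `(a,b,i,j)` of `S` with `a − b = ℓ`. -/
def Hij {d : ℕ} (S : Fin d → Finset ℕ) (i j : Fin d) (ℓ : ℕ) :
    Finset (ℕ × ℕ × Fin d × Fin d) :=
  (symbolHooks S).filter fun z => z.2.2.1 = i ∧ z.2.2.2 = j ∧ z.1 - z.2.1 = ℓ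

/-- The sign-modified length `h̄^{δ_S}` (on hooks of the balanced quotient), where
`x` records the cardinalities `x_i = |X_i|` of `S`, and `δ_S = (c_i + x_i k; k)`.
For a hook `z = (a,b,u,v)` with `ℓ = a − b`: relabelling so that `Δ = x_i − x_j ≥ 0`,
the sign is `+` if `z` lies in position `(i,j)`, or in position `(j,i)` with `ℓ > Δ`,
or in position `(j,i)` with `ℓ = Δ` and `i < j`; otherwise the sign is `−`. -/
noncomputable def signedLen {d : ℕ} (x : Fin d → ℕ) (c : Fin d → ℝ) (k : ℝ)
    (z : ℕ × ℕ × Fin d × Fin d) : ℝ :=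
  if x z.2.2.2 ≤ x z.2.2.1 then
    k * ((z.1 - z.2.1 : ℕ) : ℝ) + (c z.2.2.1 + (x z.2.2.1 : ℝ) * k)
      - (c z.2.2.2 + (x z.2.2.2 : ℝ) * k)
  else if x z.2.2.2 - x z.2.2.1 < z.1 - z.2.1 ∨
      (z.1 - z.2.1 = x z.2.2.2 - x z.2.2.1 ∧ (z.2.2.2 : ℕ) < (z.2.2.1 : ℕ)) then
    k * ((z.1 - z.2.1 : ℕ) : ℝ) + (c z.2.2.1 + (x z.2.2.1 : ℝ) * k)
      - (c z.2.2.2 + (x z.2.2.2 : ℝ) * k)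
  else
    -(k * ((z.1 - z.2.1 : ℕ) : ℝ) + (c z.2.2.1 + (x z.2.2.1 : ℝ) * k)
      - (c z.2.2.2 + (x z.2.2.2 : ℝ) * k))

/-- The permutation `σ_{d,ℓ,e}` of `ℕ`:
`σ(r(dℓ) + sd + t) = r(dℓ) + sd + ((t + re) mod d)`. -/
def twistFun (d ℓ e : ℕ) (n : ℕ) : ℕ :=
  d * ℓ * (n / (d * ℓ)) + d * (n % (d * ℓ) / d) + (n % d + n / (d * ℓ) * e) % d

/-!
Every hook `(a, b, i, j)` has a type `(a − b, i, j)` which determines its `δ`-length, and the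
sign-modified length of a hook of `Q(S)` is the `δ`-length of an explicit "signed type". So it
suffices to show that for every type, the hooks of `S` of that type are as many as the hooks of
`Q(S)` of that signed type plus the hooks of `C(S)` of that type; the bijection is then assembled
fibre by fibre.

For a type `(t, u, v)` all three numbers are hook counts between two β-sets. The β-sets `X_u^{+r}`
and `Y_u^{+x_u}` have the same cardinality and partition, hence coincide, and hook counts are
invariant under a common shift. Comparing `Y_u^{+x_u}` with `Y_v^{+x_v}` (where `|Y_u| = |Y_v|`)
splits the hooks of length `t` into hooks from `Y_u` to `Y_v` of length `t − (x_u − x_v)`, hooks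
from `Y_v` to `Y_u` of length `x_u − x_v − t` (the sign-reversed ones), and hooks of the core.
-/

open Finset

section ShiftUp

lemma mem_shiftUp {X : Finset ℕ} {s a : ℕ} : a ∈ shiftUp X s ↔ a < s ∨ s ≤ a ∧ a - s ∈ X := by
  simp only [shiftUp, mem_union, mem_image, mem_range]
  constructor
  · rintro (⟨b, hb, rfl⟩ | h)
    · exact Or.inr ⟨by omega, by simpa using hb⟩
    · exact Or.inl h
  · rintro (h | ⟨h, hX⟩)
    · exact Or.inr h
    · exact Or.inl ⟨a - s, hX, by omega⟩

lemma disjoint_image_add_range (X : Finset ℕ) (s : ℕ) : Disjoint (X.image (· + s)) (range s) := by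
  simp only [disjoint_right, mem_range, mem_image, not_exists, not_and]
  omega

lemma card_shiftUp (X : Finset ℕ) (s : ℕ) : #(shiftUp X s) = #X + s := by
  rw [shiftUp, card_union_of_disjoint (disjoint_image_add_range X s),
    card_image_of_injective _ (add_left_injective s), card_range]

lemma shiftUp_shiftUp (X : Finset ℕ) (s t : ℕ) :
    shiftUp (shiftUp X s) t = shiftUp X (s + t) := by
  ext a
  simp only [mem_shiftUp, Nat.sub_sub, add_comm t s]
  grind

lemma shiftUp_range (a s : ℕ) : shiftUp (range a) s = range (a + s) := by
  ext b
  simp only [mem_shiftUp, mem_range]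
  omega

lemma card_filter_lt_shiftUp_add (X : Finset ℕ) (s a : ℕ) :
    #((shiftUp X s).filter (· < a + s)) = #(X.filter (· < a)) + s := by
  have h : (shiftUp X s).filter (· < a + s) = shiftUp (X.filter (· < a)) s := by
    ext b
    simp only [mem_filter, mem_shiftUp]
    grind
  rw [h, card_shiftUp]

lemma partitionOf_shiftUp (X : Finset ℕ) (s : ℕ) :
    partitionOf (shiftUp X s) = partitionOf X := by
  have hval : (shiftUp X s).val = X.val.map (· + s) + (range s).val := by
    rw [shiftUp, ← disjUnion_eq_union _ _ (disjoint_image_add_range X s), disjUnion_val,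
      image_val_of_injOn (add_left_injective s).injOn]
  -- the new elements `0, …, s - 1` all contribute the part `0`
  have hlow : ((range s).val.map fun a => a - #((shiftUp X s).filter (· < a))).filter (· ≠ 0)
      = 0 := by
    refine Multiset.filter_eq_nil.mpr fun p hp => ?_
    obtain ⟨a, ha, rfl⟩ := Multiset.mem_map.mp hp
    have : range a ⊆ (shiftUp X s).filter (· < a) := fun b hb => by
      simp only [mem_range, mem_filter, mem_shiftUp] at hb ha ⊢
      grind
    have := card_le_card this
    rw [card_range] at this
    omega
  rw [partitionOf, hval, Multiset.map_add, Multiset.filter_add, hlow, add_zero, Multiset.map_map,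
    partitionOf]
  congr 1
  refine Multiset.map_congr rfl fun a _ => ?_
  simp only [Function.comp_apply, card_filter_lt_shiftUp_add]
  omega

end ShiftUp

section BetaSetOfPartition

def betaPart (X : Finset ℕ) (a : ℕ) : ℕ := a - #(X.filter (· < a))

lemma partitionOf_eq_filter_map_betaPart (X : Finset ℕ) :
    partitionOf X = (X.val.map (betaPart X)).filter (· ≠ 0) := rfl

lemma card_filter_lt_le (X : Finset ℕ) (a : ℕ) : #(X.filter (· < a)) ≤ a := by
  have h : X.filter (· < a) ⊆ range a := fun b hb => mem_range.2 (mem_filter.1 hb).2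
  simpa using card_le_card h

lemma betaPart_mono (X : Finset ℕ) : Monotone (betaPart X) := by
  intro a b hab
  have hsub : X.filter (· < b) ⊆ X.filter (· < a) ∪ Ico a b := fun c hc => by
    simp only [mem_filter, mem_union, mem_Ico] at hc ⊢
    rcases lt_or_ge c a with h | h
    exacts [Or.inl ⟨hc.1, h⟩, Or.inr ⟨h, hc.2⟩]
  have hb := (card_le_card hsub).trans (card_union_le _ _)
  rw [Nat.card_Ico] at hb
  have ha := card_filter_lt_le X a
  simp only [betaPart]
  omega

lemma filter_lt_max' (X : Finset ℕ) (hX : X.Nonempty) :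
    X.filter (· < X.max' hX) = X.erase (X.max' hX) := by
  ext b
  simp only [mem_filter, mem_erase]
  have := le_max' X b
  constructor
  · rintro ⟨hb, hlt⟩
    exact ⟨hlt.ne, hb⟩
  · rintro ⟨hne, hb⟩
    exact ⟨hb, lt_of_le_of_ne (this hb) hne⟩

lemma betaPart_max' (X : Finset ℕ) (hX : X.Nonempty) :
    betaPart X (X.max' hX) = X.max' hX - (#X - 1) := by
  rw [betaPart, filter_lt_max', card_erase_of_mem (max'_mem X hX)]

lemma betaPart_erase_max' {X : Finset ℕ} (hX : X.Nonempty) {a : ℕ} (ha : a ≤ X.max' hX) :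
    betaPart (X.erase (X.max' hX)) a = betaPart X a := by
  rw [betaPart, betaPart, filter_erase, erase_eq_of_notMem]
  simp only [mem_filter, not_and, not_lt]
  exact fun _ => ha

lemma eq_range_of_betaPart_max'_eq_zero {X : Finset ℕ} (hX : X.Nonempty)
    (h : betaPart X (X.max' hX) = 0) : X = range #X := by
  rw [betaPart_max'] at h
  refine eq_of_subset_of_card_le (fun a ha => ?_) (card_range _).le
  have := le_max' X a ha
  have := card_pos.2 hX
  rw [mem_range]
  omega

lemma sup_partitionOf (X : Finset ℕ) (hX : X.Nonempty) :
    (partitionOf X).sup = betaPart X (X.max' hX) := by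
  refine le_antisymm (Multiset.sup_le.2 fun p hp => ?_) ?_
  · rw [partitionOf_eq_filter_map_betaPart, Multiset.mem_filter, Multiset.mem_map] at hp
    obtain ⟨⟨a, ha, rfl⟩, -⟩ := hp
    exact betaPart_mono X (le_max' X a ha)
  · by_cases h0 : betaPart X (X.max' hX) = 0
    · simp [h0]
    · exact Multiset.le_sup (Multiset.mem_filter.2
        ⟨Multiset.mem_map.2 ⟨_, mem_def.1 (max'_mem X hX), rfl⟩, h0⟩)

lemma partitionOf_eq_cons {X : Finset ℕ} (hX : X.Nonempty) (h : betaPart X (X.max' hX) ≠ 0) :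
    partitionOf X = betaPart X (X.max' hX) ::ₘ partitionOf (X.erase (X.max' hX)) := by
  have hval : X.val = X.max' hX ::ₘ (X.erase (X.max' hX)).val := by
    rw [erase_val, Multiset.cons_erase (mem_def.1 (max'_mem X hX))]
  rw [partitionOf_eq_filter_map_betaPart, hval, Multiset.map_cons,
    Multiset.filter_cons_of_pos (p := (· ≠ 0)) _ h, partitionOf_eq_filter_map_betaPart]
  congr 2
  exact Multiset.map_congr rfl fun a ha =>
    (betaPart_erase_max' hX (le_max' X a (mem_of_mem_erase (mem_def.2 ha)))).symm

theorem eq_of_card_eq_of_partitionOf_eq :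
    ∀ {n : ℕ} {X W : Finset ℕ}, #X = n → #W = n → partitionOf X = partitionOf W → X = W
  | 0, X, W, hX, hW, _ => by rw [card_eq_zero.1 hX, card_eq_zero.1 hW]
  | n + 1, X, W, hX, hW, hXW => by
    have hXne : X.Nonempty := card_pos.1 (by omega)
    have hWne : W.Nonempty := card_pos.1 (by omega)
    have hpart : betaPart X (X.max' hXne) = betaPart W (W.max' hWne) := by
      rw [← sup_partitionOf, ← sup_partitionOf, hXW]
    by_cases h0 : betaPart X (X.max' hXne) = 0
    · rw [eq_range_of_betaPart_max'_eq_zero hXne h0,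
        eq_range_of_betaPart_max'_eq_zero hWne (hpart ▸ h0), hX, hW]
    -- a nonzero largest part `max X − (n − 1)` determines `max X`
    have hmax : X.max' hXne = W.max' hWne := by
      rw [betaPart_max', hX] at h0
      rw [betaPart_max', betaPart_max', hX, hW] at hpart
      omega
    rw [partitionOf_eq_cons hXne h0, partitionOf_eq_cons hWne (hpart ▸ h0), hpart,
      Multiset.cons_inj_right] at hXW
    have herase : X.erase (X.max' hXne) = W.erase (W.max' hWne) :=
      eq_of_card_eq_of_partitionOf_eq (by rw [card_erase_of_mem (max'_mem X hXne), hX])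
        (by rw [card_erase_of_mem (max'_mem W hWne), hW]) hXW
    rw [← insert_erase (max'_mem X hXne), ← insert_erase (max'_mem W hWne), herase, hmax]

end BetaSetOfPartition

section HookCount

def hookCount (A B : Finset ℕ) (ℓ : ℕ) : ℕ := #(A.filter fun a => ℓ ≤ a ∧ a - ℓ ∉ B)

lemma hookCount_shiftUp_right (A V : Finset ℕ) (Δ t : ℕ) :
    hookCount A (shiftUp V Δ) t = hookCount A V (t + Δ) := by
  refine congrArg card (filter_congr fun a _ => ?_)
  simp only [mem_shiftUp, Nat.sub_sub]
  grind

lemma hookCount_shiftUp_left {U B : Finset ℕ} {Δ t : ℕ} (h : Δ ≤ t) :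
    hookCount (shiftUp U Δ) B t = hookCount U B (t - Δ) := by
  refine card_nbij' (· - Δ) (· + Δ) ?_ ?_ ?_ ?_ <;> intro a ha <;>
    simp only [coe_filter, Set.mem_ofPred_eq, mem_shiftUp] at ha ⊢
  · have : a - Δ - (t - Δ) = a - t := by omega
    grind
  · have : a + Δ - t = a - (t - Δ) := by omega
    grind
  · omega
  · omega

lemma hookCount_shiftUp_shiftUp (A B : Finset ℕ) (s ℓ : ℕ) :
    hookCount (shiftUp A s) (shiftUp B s) ℓ = hookCount A B ℓ := by
  rw [hookCount_shiftUp_right, hookCount_shiftUp_left (Nat.le_add_left s ℓ), Nat.add_sub_cancel]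

lemma hookCount_range_empty (Δ t : ℕ) : hookCount (range Δ) ∅ t = Δ - t := by
  rw [hookCount, ← Nat.card_Ico]
  congr 1
  ext a
  simp only [mem_filter, mem_range, mem_Ico, notMem_empty, not_false_eq_true, and_true]
  omega

lemma hookCount_zero (A B : Finset ℕ) : hookCount A B 0 = #(A \ B) := by
  simp only [hookCount, zero_le, Nat.sub_zero, true_and, filter_notMem_eq_sdiff]

lemma hookCount_shiftUp_left_of_lt {U B : Finset ℕ} {Δ t : ℕ} (h : t < Δ) (hUB : #U = #B) :
    hookCount (shiftUp U Δ) B t = (Δ - t) + hookCount B U (Δ - t) := by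
  set X := shiftUp U (Δ - t)
  have hX : #X = #B + (Δ - t) := by rw [card_shiftUp, hUB]
  have hsplit : shiftUp U Δ = shiftUp X t := by rw [shiftUp_shiftUp, Nat.sub_add_cancel h.le]
  have hBU : hookCount B X 0 = hookCount B U (Δ - t) := by
    rw [hookCount_shiftUp_right, zero_add]
  rw [hsplit, hookCount_shiftUp_left le_rfl, Nat.sub_self, ← hBU, hookCount_zero, hookCount_zero]
  -- `#(X \ B) − #(B \ X) = #X − #B`
  have := card_sdiff_add_card_inter X B
  have := card_sdiff_add_card_inter B X
  rw [inter_comm] at this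
  omega

end HookCount

section PairHookCount

/-- Hooks of length `ℓ` from `A` to `B` counted as hooks of a symbol in position `(u, v)` with
`A = S u` and `B = S v`: those of length `0` count exactly when `τ` (that is, `v < u`) holds. -/
def pairHookCount (A B : Finset ℕ) (ℓ : ℕ) (τ : Prop) [Decidable τ] : ℕ :=
  if 0 < ℓ ∨ τ then hookCount A B ℓ else 0

variable (τ : Prop) [Decidable τ]

lemma pairHookCount_congr {A B : Finset ℕ} {ℓ : ℕ} {σ : Prop} [Decidable σ] (h : τ ↔ σ) :
    pairHookCount A B ℓ τ = pairHookCount A B ℓ σ := by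
  simp only [pairHookCount, h]

lemma pairHookCount_shiftUp_shiftUp (A B : Finset ℕ) (s ℓ : ℕ) :
    pairHookCount (shiftUp A s) (shiftUp B s) ℓ τ = pairHookCount A B ℓ τ := by
  simp only [pairHookCount, hookCount_shiftUp_shiftUp]

lemma pairHookCount_range_range_of_le {xu xv : ℕ} (h : xu ≤ xv) (t : ℕ) :
    pairHookCount (range xu) (range xv) t τ = 0 := by
  have : hookCount (range xu) (range xv) t = 0 := by
    refine card_eq_zero.2 (filter_eq_empty_iff.2 fun a ha => ?_)
    simp only [mem_range] at ha ⊢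
    omega
  simp only [pairHookCount, this, ite_self]

lemma pairHookCount_shiftUp_shiftUp_of_le {U V : Finset ℕ} (hUV : #U = #V) {xu xv : ℕ}
    (h : xv ≤ xu) (t : ℕ) :
    pairHookCount (shiftUp U xu) (shiftUp V xv) t τ =
      (if xu - xv ≤ t then pairHookCount U V (t - (xu - xv)) τ else 0)
      + (if xv < xu ∧ t ≤ xu - xv ∧ (0 < t ∨ τ) then pairHookCount V U (xu - xv - t) (¬τ)
        else 0)
      + pairHookCount (range xu) (range xv) t τ := by
  obtain ⟨Δ, rfl⟩ := Nat.exists_eq_add_of_le h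
  have hU : shiftUp U (xv + Δ) = shiftUp (shiftUp U Δ) xv := by rw [shiftUp_shiftUp, add_comm]
  have hcore : range (xv + Δ) = shiftUp (range Δ) xv := by rw [shiftUp_range, add_comm]
  have hV : range xv = shiftUp ∅ xv := by rw [← range_zero, shiftUp_range, zero_add]
  rw [hU, hcore, hV, pairHookCount_shiftUp_shiftUp, pairHookCount_shiftUp_shiftUp,
    Nat.add_sub_cancel_left]
  simp only [pairHookCount, lt_add_iff_pos_right]
  rcases lt_trichotomy t Δ with hlt | rfl | hgt
  · rw [hookCount_shiftUp_left_of_lt hlt hUV, hookCount_range_empty]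
    by_cases hτ : τ <;> split_ifs <;> simp_all <;> omega
  · -- hooks of length `0` are counted from `U` to `V` or from `V` to `U` according to `τ`,
    -- and there are as many of either kind
    rw [hookCount_shiftUp_left le_rfl, Nat.sub_self, hookCount_range_empty, hookCount_zero,
      hookCount_zero, card_sdiff_comm hUV]
    split_ifs <;> first | omega | simp_all
  · rw [hookCount_shiftUp_left hgt.le, hookCount_range_empty]
    split_ifs <;> omega

lemma pairHookCount_shiftUp_shiftUp_of_lt (U V : Finset ℕ) {xu xv : ℕ} (h : xu < xv) (t : ℕ) :
    pairHookCount (shiftUp U xu) (shiftUp V xv) t τ =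
      if 0 < t ∨ τ then pairHookCount U V (t + (xv - xu)) τ else 0 := by
  obtain ⟨Δ, rfl⟩ := Nat.exists_eq_add_of_le h.le
  rw [add_comm xu Δ, ← shiftUp_shiftUp V Δ xu, pairHookCount_shiftUp_shiftUp, Nat.add_sub_cancel]
  simp only [pairHookCount, hookCount_shiftUp_right]
  split_ifs <;> omega

end PairHookCount

section SymbolHooks

variable {d : ℕ}

lemma mem_symbolHooks {T : Fin d → Finset ℕ} {z : ℕ × ℕ × Fin d × Fin d} :
    z ∈ symbolHooks T ↔ z.1 ∈ T z.2.2.1 ∧ z.2.1 ∉ T z.2.2.2 ∧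
      (z.2.1 < z.1 ∨ z.1 = z.2.1 ∧ z.2.2.2 < z.2.2.1) := by
  refine ⟨fun h => (mem_filter.1 h).2, fun h => mem_filter.2 ⟨?_, h⟩⟩
  have ha : z.1 ≤ univ.sup fun i => (T i).sup id :=
    (le_sup (f := id) h.1).trans (le_sup (f := fun i => (T i).sup id) (mem_univ z.2.2.1))
  simp only [mem_product, mem_range, mem_univ, and_true]
  rcases h.2.2 with h' | ⟨h', -⟩ <;> omega

def hookType (z : ℕ × ℕ × Fin d × Fin d) : ℕ × Fin d × Fin d := (z.1 - z.2.1, z.2.2.1, z.2.2.2)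

lemma card_filter_hookType_eq (T : Fin d → Finset ℕ) (ℓ : ℕ) (u v : Fin d) :
    #((symbolHooks T).filter fun z => hookType z = (ℓ, u, v)) =
      pairHookCount (T u) (T v) ℓ (v < u) := by
  unfold pairHookCount hookCount
  split_ifs with hℓ
  · refine card_nbij' (fun z => z.1) (fun a => (a, a - ℓ, u, v)) (fun z h => ?_)
      (fun a h => ?_) (fun z h => ?_) (fun a _ => rfl) <;>
    simp only [coe_filter, Set.mem_ofPred_eq, mem_symbolHooks, hookType, Prod.mk.injEq] at h ⊢
    · obtain ⟨⟨ha, hb, hab⟩, rfl, rfl, rfl⟩ := h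
      have : z.1 - (z.1 - z.2.1) = z.2.1 := by omega
      exact ⟨ha, by omega, by rwa [this]⟩
    · exact ⟨⟨h.1, h.2.2, by omega⟩, by omega, trivial, trivial⟩
    · obtain ⟨⟨-, -, hab⟩, rfl, rfl, rfl⟩ := h
      exact Prod.ext rfl (Prod.ext (by simp only; omega) rfl)
  · refine card_eq_zero.2 (filter_eq_empty_iff.2 fun z hz h => ?_)
    simp only [mem_symbolHooks, hookType, Prod.mk.injEq] at hz h
    omega

lemma card_filter_symbolHooks_eq_ite {T : Fin d → Finset ℕ} {p : ℕ × ℕ × Fin d × Fin d → Prop}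
    [DecidablePred p] {ℓ : ℕ} {u v : Fin d} {C : Prop} [Decidable C]
    (h : ∀ z ∈ symbolHooks T, p z ↔ hookType z = (ℓ, u, v) ∧ C) :
    #((symbolHooks T).filter p) = if C then pairHookCount (T u) (T v) ℓ (v < u) else 0 := by
  rw [← card_filter_hookType_eq]
  split_ifs with hC
  · exact congrArg card (filter_congr fun z hz => by rw [h z hz, and_iff_left hC])
  · exact card_eq_zero.2 (filter_eq_empty_iff.2 fun z hz hp => hC ((h z hz).1 hp).2)

def signedHookType (x : Fin d → ℕ) (z : ℕ × ℕ × Fin d × Fin d) : ℕ × Fin d × Fin d :=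
  if x z.2.2.2 ≤ x z.2.2.1 then
    (z.1 - z.2.1 + (x z.2.2.1 - x z.2.2.2), z.2.2.1, z.2.2.2)
  else if x z.2.2.2 - x z.2.2.1 < z.1 - z.2.1 ∨
      (z.1 - z.2.1 = x z.2.2.2 - x z.2.2.1 ∧ (z.2.2.2 : ℕ) < (z.2.2.1 : ℕ)) then
    (z.1 - z.2.1 - (x z.2.2.2 - x z.2.2.1), z.2.2.1, z.2.2.2)
  else
    (x z.2.2.2 - x z.2.2.1 - (z.1 - z.2.1), z.2.2.2, z.2.2.1)

lemma card_filter_signedHookType_eq (Y : Fin d → Finset ℕ) (x : Fin d → ℕ) (t : ℕ) (u v : Fin d) :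
    #((symbolHooks Y).filter fun z => signedHookType x z = (t, u, v)) =
      (if x v ≤ x u then
          (if x u - x v ≤ t then pairHookCount (Y u) (Y v) (t - (x u - x v)) (v < u) else 0)
        else if 0 < t ∨ v < u then pairHookCount (Y u) (Y v) (t + (x v - x u)) (v < u) else 0)
      + (if x v < x u ∧ t ≤ x u - x v ∧ (0 < t ∨ v < u) then
          pairHookCount (Y v) (Y u) (x u - x v - t) (u < v) else 0) := by
  -- hooks in position `(u, v)` give the first summand, those in position `(v, u)` the second
  rw [← card_filter_add_card_filter_not (fun z => z.2.2 = (u, v)), filter_filter, filter_filter]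
  congr 1
  on_goal 1 => split
  all_goals
    refine card_filter_symbolHooks_eq_ite fun z hz => ?_
    have := (mem_symbolHooks.1 hz).2.2
    simp only [signedHookType, hookType, Prod.mk.injEq]
    grind

end SymbolHooks

section BalancedQuotient

variable {d : ℕ} {S Y : Fin d → Finset ℕ}

lemma shiftUp_quotCard (hY : IsBalancedQuotient S Y) (i : Fin d) :
    shiftUp (S i) (quotCard S) = shiftUp (Y i) #(S i) :=
  eq_of_card_eq_of_partitionOf_eq (card_shiftUp _ _)
    (by rw [card_shiftUp, (hY i).1, add_comm])
    (by rw [partitionOf_shiftUp, partitionOf_shiftUp, (hY i).2])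

lemma card_filter_hookType_eq_add (hY : IsBalancedQuotient S Y) (w : ℕ × Fin d × Fin d) :
    #((symbolHooks S).filter fun z => hookType z = w) =
      #((symbolHooks Y).filter fun z => signedHookType (fun i => #(S i)) z = w)
      + #((symbolHooks (coreSymbol S)).filter fun z => hookType z = w) := by
  obtain ⟨t, u, v⟩ := w
  rw [card_filter_hookType_eq, card_filter_signedHookType_eq, card_filter_hookType_eq,
    ← pairHookCount_shiftUp_shiftUp _ (S u) (S v) (quotCard S), shiftUp_quotCard hY,
    shiftUp_quotCard hY]
  simp only [coreSymbol]
  by_cases hx : #(S v) ≤ #(S u)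
  · rw [pairHookCount_shiftUp_shiftUp_of_le _ ((hY u).1.trans (hY v).1.symm) hx, if_pos hx]
    congr 2
    split_ifs with hc
    · refine pairHookCount_congr _ ⟨fun h => ?_, fun h => not_lt.2 h.le⟩
      have : u ≠ v := by rintro rfl; exact lt_irrefl _ hc.1
      omega
    · rfl
  · have hlt := not_le.1 hx
    have hc : ¬(#(S v) < #(S u) ∧ t ≤ #(S u) - #(S v) ∧ (0 < t ∨ v < u)) := fun h => hx h.1.le
    rw [pairHookCount_shiftUp_shiftUp_of_lt _ _ _ hlt, if_neg hx, if_neg hc,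
      pairHookCount_range_range_of_le _ hlt.le, add_zero, add_zero]

end BalancedQuotient

section FiberwiseEquiv

lemma card_subtype_fiber {α ι : Type*} [DecidableEq ι] (s : Finset α) (f : α → ι) (i : ι)
    [Fintype {a : s // f a = i}] : Fintype.card {a : s // f a = i} = #(s.filter (f · = i)) :=
  (Fintype.card_congr ((Equiv.subtypeSubtypeEquivSubtypeInter (· ∈ s) (f · = i)).trans
    (Equiv.subtypeEquivRight fun _ => (mem_filter (p := (f · = i))).symm))).trans
    (Fintype.card_coe _)

lemma exists_equiv_sum_of_card_filter_eq {α β γ ι : Type*} [DecidableEq ι] {s : Finset α}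
    {t : Finset β} {r : Finset γ} {f : α → ι} {g : β → ι} {h : γ → ι}
    (hcard : ∀ i, #(s.filter (f · = i)) = #(t.filter (g · = i)) + #(r.filter (h · = i))) :
    ∃ e : s ≃ t ⊕ r, ∀ a, Sum.elim (g ∘ Subtype.val) (h ∘ Subtype.val) (e a) = f a := by
  refine ⟨Equiv.ofFiberEquiv fun i => Fintype.equivOfCardEq ?_, Equiv.ofFiberEquiv_map _⟩
  rw [Fintype.card_congr Equiv.subtypeSum, Fintype.card_sum, card_subtype_fiber, hcard,
    ← card_subtype_fiber t g, ← card_subtype_fiber r h]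
  rfl

end FiberwiseEquiv

section Lengths

variable {d : ℕ}

noncomputable def typeLen (c : Fin d → ℝ) (k : ℝ) (w : ℕ × Fin d × Fin d) : ℝ :=
  k * w.1 + c w.2.1 - c w.2.2

lemma hookLen_eq_typeLen (c : Fin d → ℝ) (k : ℝ) (z : ℕ × ℕ × Fin d × Fin d) :
    hookLen c k z = typeLen c k (hookType z) := rfl

lemma signedLen_eq_typeLen (x : Fin d → ℕ) (c : Fin d → ℝ) (k : ℝ)
    (z : ℕ × ℕ × Fin d × Fin d) : signedLen x c k z = typeLen c k (signedHookType x z) := by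
  unfold signedLen signedHookType typeLen
  generalize z.1 - z.2.1 = ℓ
  split_ifs with h₁ h₂
  · push_cast [Nat.cast_sub h₁]
    ring
  · have hℓ : x z.2.2.2 - x z.2.2.1 ≤ ℓ := by omega
    push_cast [Nat.cast_sub (le_of_not_ge h₁), Nat.cast_sub hℓ]
    ring
  · have hℓ : ℓ ≤ x z.2.2.2 - x z.2.2.1 := by omega
    push_cast [Nat.cast_sub (le_of_not_ge h₁), Nat.cast_sub hℓ]
    ring

end Lengths

theorem exists_universal_bijection_general (d : ℕ) (S Y : Fin d → Finset ℕ)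
    (hY : IsBalancedQuotient S Y) :
    ∃ ω : {z // z ∈ symbolHooks S} ≃
        {z // z ∈ symbolHooks Y} ⊕ {z // z ∈ symbolHooks (coreSymbol S)},
      ∀ (c : Fin d → ℝ) (k : ℝ), 0 ≤ k → ∀ z : {z // z ∈ symbolHooks S},
        Sum.elim
          (fun q : {z // z ∈ symbolHooks Y} =>
            hookLen c k z.val = signedLen (fun i => (S i).card) c k q.val)
          (fun r : {z // z ∈ symbolHooks (coreSymbol S)} =>
            hookLen c k z.val = hookLen c k r.val)
          (ω z) := by
  obtain ⟨ω, hω⟩ := exists_equiv_sum_of_card_filter_eq (card_filter_hookType_eq_add hY)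
  refine ⟨ω, fun c k _ z => ?_⟩
  have htype := hω z
  rcases hz : ω z with q | r <;> rw [hz] at htype
  · rw [Sum.elim_inl, hookLen_eq_typeLen, signedLen_eq_typeLen]
    exact congrArg _ htype.symm
  · rw [Sum.elim_inr, hookLen_eq_typeLen, hookLen_eq_typeLen]
    exact congrArg _ htype.symm

/-- There is a bijection `ω` from `H(S)` onto `H(Q) ⊔ H(C)` such that for every
`d`-hook data tuple `δ = (c_0,…,c_{d−1};k)` and every hook `z` of `S`:
if `ω z ∈ H(Q)` then `h^δ(z) = h̄^{δ_S}(ω z)`, and if `ω z ∈ H(C)` then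
`h^δ(z) = h^δ(ω z)`. Here `δ_S = (c_0 + x_0 k,…,c_{d−1} + x_{d−1} k; k)`,
`x_i = |X_i|`. -/
theorem exists_universal_bijection (d : ℕ) (hd : 0 < d) (S Y : Fin d → Finset ℕ)
    (hY : IsBalancedQuotient S Y) :
    ∃ ω : {z // z ∈ symbolHooks S} ≃
        {z // z ∈ symbolHooks Y} ⊕ {z // z ∈ symbolHooks (coreSymbol S)},
      ∀ (c : Fin d → ℝ) (k : ℝ), 0 ≤ k → ∀ z : {z // z ∈ symbolHooks S},
        Sum.elim
          (fun q : {z // z ∈ symbolHooks Y} =>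
            hookLen c k z.val = signedLen (fun i => (S i).card) c k q.val)
          (fun r : {z // z ∈ symbolHooks (coreSymbol S)} =>
            hookLen c k z.val = hookLen c k r.val)
          (ω z) :=
  exists_universal_bijection_general d S Y hY
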